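/- The set of affine critical points of F, namely {(x, y) ∈ ℂ² : (p(x,y), q(x,y)) ≠ (0,0), (q·∂p/∂x − p·∂q/∂x)(x,y) = 0, and (q·∂p/∂y − p·∂q/∂y)(x,y) = 0}, has exactly 3d² elements. -/

import Mathlib

open MvPolynomial

/-- The affine linear form `R_k(x,y,1) = (2d+1-k)x + ky - k(2d+1-k)` as a polynomial
in two variables. -/
noncomputable def R2 (d k : ℕ) : MvPolynomial (Fin 2) ℂ :=
  C (2*(d:ℂ)+1-(k:ℂ)) * X 0 + C (k:ℂ) * X 1 - C ((k:ℂ)*(2*(d:ℂ)+1-(k:ℂ)))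

/-- `p(x,y) = P(x,y,1) = ∏_{k=0}^{d} R_k(x,y,1)`. -/
noncomputable def pPoly (d : ℕ) : MvPolynomial (Fin 2) ℂ :=
  ∏ k ∈ Finset.range (d+1), R2 d k

/-- `q(x,y) = Q(x,y,1) = ∏_{k=d+1}^{2d+1} R_k(x,y,1)`. -/
noncomputable def qPoly (d : ℕ) : MvPolynomial (Fin 2) ℂ :=
  ∏ k ∈ Finset.Icc (d+1) (2*d+1), R2 d k

/-!
Write `S = 2d + 1`. Above a point `(x, y)` pick `u, v` with `u + v = S + x - y` and `u v = S x`.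
Then `R_k(x, y, 1) = (u - k)(v - k)`, so `p = g(u) g(v)` and `q = h(u) h(v)` for
`g = ∏_{k ≤ d} (X - k)` and `h = ∏_{d < k ≤ 2d+1} (X - k)`. In these coordinates the derivation
`v ∂ₓ - (S - v) ∂_y` is `S ∂_u`, so the two critical equations give
`g(v) h(v) W(u) = 0 = g(u) h(u) W(v)` with `W = g'h - gh'`, and are equivalent to them when
`u ≠ v`. The polynomials `g`, `h`, `W` have simple roots and no two share a root: `W` has degree
at most `2d` (the leading terms cancel) and, by Rolle's theorem for `g/h` and `h/g`, a real root
in each of the `2d` intervals `(i, i + 1)`, `i ∈ [0, 2d] \ {d}`. On the branch locus `u = v` the sum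
of the critical equations is `S (h²(g'² - gg'') - g²(h'² - hh''))`, which equals `-S g h W'` at a
root of `W` and never vanishes. Hence critical points correspond to two-element sets of roots of
`g`, of `h` or of `W` (mixed pairs lie on `p = q = 0`), and there are
`2 C(d+1, 2) + C(2d, 2) = 3d²` of them.
-/

open Polynomial Finset Lagrange

theorem Derivation.leibniz_finset_prod {R A M ι : Type*} [CommSemiring R] [CommSemiring A]
    [Algebra R A] [AddCommMonoid M] [Module A M] [Module R M] [DecidableEq ι]
    (D : Derivation R A M) (s : Finset ι) (f : ι → A) :
    D (∏ k ∈ s, f k) = ∑ k ∈ s, (∏ j ∈ s.erase k, f j) • D (f k) := by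
  induction s using Finset.induction_on with
  | empty => simp
  | insert a s ha ih =>
    rw [prod_insert ha, D.leibniz, ih, sum_insert ha, erase_insert ha, smul_sum, add_comm]
    congr 1
    refine sum_congr rfl fun k hk => ?_
    rw [erase_insert_of_ne (ne_of_mem_of_not_mem hk ha).symm,
      prod_insert fun h => ha (mem_of_mem_erase h), mul_smul]

theorem Finset.sum_sq_prod_erase {R ι : Type*} [CommRing R] [DecidableEq ι] (s : Finset ι)
    (f : ι → R) :
    ∑ k ∈ s, (∏ j ∈ s.erase k, f j) ^ 2 =
      (∑ k ∈ s, ∏ j ∈ s.erase k, f j) ^ 2 -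
        (∏ j ∈ s, f j) * ∑ k ∈ s, ∑ l ∈ s.erase k, ∏ j ∈ (s.erase k).erase l, f j := by
  have cross : ∀ k ∈ s, ∀ l ∈ s.erase k, (∏ j ∈ s.erase k, f j) * ∏ j ∈ s.erase l, f j =
      (∏ j ∈ s, f j) * ∏ j ∈ (s.erase k).erase l, f j := by
    intro k hk l hl
    have hks : k ∈ s.erase l := mem_erase.2 ⟨(ne_of_mem_erase hl).symm, hk⟩
    rw [← mul_prod_erase _ _ hk, ← mul_prod_erase _ _ hl, ← mul_prod_erase _ _ hks,
      erase_right_comm]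
    ring
  rw [sq, sum_mul_sum, mul_sum, eq_sub_iff_add_eq, ← sum_add_distrib]
  refine sum_congr rfl fun k hk => ?_
  rw [← add_sum_erase _ _ hk, sq, add_comm, mul_sum, ← sum_congr rfl (cross k hk)]
  ring

theorem Finset.pair_eq_pair_of_add_eq_of_mul_eq {R : Type*} [CommRing R] [IsDomain R]
    [DecidableEq R] {a b c e : R} (hadd : a + b = c + e) (hmul : a * b = c * e) :
    ({a, b} : Finset R) = {c, e} := by
  have : (c - a) * (c - b) = 0 := by linear_combination -c * hadd + hmul
  rcases mul_eq_zero.1 this with h | h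
  · obtain rfl : c = a := sub_eq_zero.1 h
    obtain rfl : e = b := by linear_combination -hadd
    rfl
  · obtain rfl : c = b := sub_eq_zero.1 h
    obtain rfl : e = a := by linear_combination -hadd
    exact pair_comm _ _

theorem Finset.disjoint_powersetCard_of_disjoint {α : Type*} {s t : Finset α} {n : ℕ} (hn : n ≠ 0)
    (h : Disjoint s t) : Disjoint (s.powersetCard n) (t.powersetCard n) := by
  refine disjoint_left.2 fun u hs ht => ?_
  obtain ⟨hus, hcard⟩ := mem_powersetCard.1 hs
  obtain ⟨a, ha⟩ := card_pos.1 (hcard ▸ Nat.pos_of_ne_zero hn)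
  exact disjoint_left.1 h (hus ha) ((mem_powersetCard.1 ht).1 ha)

namespace Polynomial

variable {R : Type*} [CommRing R]

theorem map_wronskian {S : Type*} [CommRing S] (f : R →+* S) (a b : R[X]) :
    (wronskian a b).map f = wronskian (a.map f) (b.map f) := by
  simp only [wronskian, Polynomial.map_sub, Polynomial.map_mul, derivative_map]

variable [IsDomain R]

theorem roots_eq_val_of_natDegree_le {p : R[X]} (hp : p ≠ 0) {s : Finset R}
    (hs : ∀ r ∈ s, p.IsRoot r) (hdeg : p.natDegree ≤ #s) : p.roots = s.val := by
  have hle : s.val ≤ p.roots :=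
    (Multiset.le_iff_subset s.nodup).2 fun r hr => (mem_roots hp).2 (hs r hr)
  exact (Multiset.eq_of_le_of_card_le hle ((card_roots' p).trans hdeg)).symm

theorem eval_derivative_ne_zero_of_nodup_roots {p : R[X]} (hp : p ≠ 0) (hnodup : p.roots.Nodup)
    {r : R} (hr : p.IsRoot r) : (derivative p).eval r ≠ 0 := by
  classical
  intro hd
  have h1 : 1 < p.rootMultiplicity r := (one_lt_rootMultiplicity_iff_isRoot hp).2 ⟨hr, hd⟩
  rw [← count_roots] at h1
  exact h1.not_ge (Multiset.nodup_iff_count_le_one.1 hnodup r)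

theorem eval_wronskian_ne_zero_of_isRoot {f k : R[X]} (hf : f ≠ 0) (hnodup : f.roots.Nodup) {r : R}
    (hr : f.IsRoot r) (hk : k.eval r ≠ 0) : (wronskian k f).eval r ≠ 0 := by
  rw [wronskian, Polynomial.eval_sub, Polynomial.eval_mul, Polynomial.eval_mul, hr.eq_zero,
    mul_zero, sub_zero]
  exact mul_ne_zero hk (eval_derivative_ne_zero_of_nodup_roots hf hnodup hr)

theorem exists_eval_wronskian_eq_zero {f k : ℝ[X]} {a b : ℝ} (hab : a < b) (hfa : f.eval a = 0)
    (hfb : f.eval b = 0) (hk : ∀ t ∈ Set.Icc a b, k.eval t ≠ 0) :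
    ∃ c ∈ Set.Ioo a b, (wronskian k f).eval c = 0 := by
  obtain ⟨c, hc, hderiv⟩ := exists_hasDerivAt_eq_zero (f := fun t => f.eval t / k.eval t) hab
    (f.continuousOn.div k.continuousOn hk) (by simp [hfa, hfb])
    (fun t ht => (f.hasDerivAt t).div (k.hasDerivAt t) (hk t (Set.Ioo_subset_Icc_self ht)))
  refine ⟨c, hc, ?_⟩
  rw [div_eq_zero_iff, or_iff_left (pow_ne_zero 2 (hk c (Set.Ioo_subset_Icc_self hc)))] at hderiv
  rw [wronskian, Polynomial.eval_sub, Polynomial.eval_mul, Polynomial.eval_mul]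
  linear_combination hderiv

end Polynomial

namespace Lagrange

variable {R ι : Type*} [CommRing R]

theorem map_nodal {S : Type*} [CommRing S] (f : R →+* S) (s : Finset ι) (v : ι → R) :
    (nodal s v).map f = nodal s (f ∘ v) := by
  simp only [nodal, Polynomial.map_prod, Polynomial.map_sub, Polynomial.map_X, Polynomial.map_C,
    Function.comp_apply]

theorem eval_nodal_eq_zero_iff [IsDomain R] {s : Finset ι} {v : ι → R} {t : R} :
    (nodal s v).eval t = 0 ↔ ∃ i ∈ s, t = v i := by
  simp_rw [eval_nodal, prod_eq_zero_iff, sub_eq_zero]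

theorem roots_nodal [IsDomain R] [DecidableEq R] (s : Finset ι) {v : ι → R} (hv : Set.InjOn v s) :
    (nodal s v).roots = (s.image v).val := by
  refine roots_eq_val_of_natDegree_le nodal_ne_zero ?_ ?_
  · simp only [mem_image, forall_exists_index, and_imp]
    rintro _ i hi rfl
    exact eval_nodal_at_node hi
  · rw [natDegree_nodal, card_image_of_injOn hv]

variable [DecidableEq ι] (s : Finset ι) (v : ι → R) (t : R)

theorem eval_derivative_nodal :
    (derivative (nodal s v)).eval t = ∑ k ∈ s, ∏ j ∈ s.erase k, (t - v j) := by
  simp_rw [derivative_nodal, eval_finsetSum, eval_nodal]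

theorem eval_derivative_derivative_nodal :
    (derivative (derivative (nodal s v))).eval t =
      ∑ k ∈ s, ∑ l ∈ s.erase k, ∏ j ∈ (s.erase k).erase l, (t - v j) := by
  simp_rw [derivative_nodal, derivative_sum, derivative_nodal, eval_finsetSum, eval_nodal]

theorem sum_sq_prod_erase_eq_eval_nodal :
    ∑ k ∈ s, (∏ j ∈ s.erase k, (t - v j)) ^ 2 =
      (derivative (nodal s v)).eval t ^ 2 -
        (nodal s v).eval t * (derivative (derivative (nodal s v))).eval t := by
  rw [sum_sq_prod_erase, eval_derivative_nodal, eval_derivative_derivative_nodal, eval_nodal]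

end Lagrange

section Nodal

variable (K : Type*) [Field K] (d : ℕ)

noncomputable def pNodal : K[X] := nodal (range (d + 1)) (fun k : ℕ => (k : K))

noncomputable def qNodal : K[X] := nodal (Icc (d + 1) (2 * d + 1)) (fun k : ℕ => (k : K))

noncomputable def critWronskian : K[X] := wronskian (qNodal K d) (pNodal K d)

theorem pNodal_ne_zero : pNodal K d ≠ 0 := nodal_ne_zero

theorem qNodal_ne_zero : qNodal K d ≠ 0 := nodal_ne_zero

theorem isMonicOfDegree_pNodal : IsMonicOfDegree (pNodal K d) (d + 1) :=
  ⟨by rw [pNodal, natDegree_nodal, card_range], nodal_monic⟩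

theorem isMonicOfDegree_qNodal : IsMonicOfDegree (qNodal K d) (d + 1) :=
  ⟨by rw [qNodal, natDegree_nodal, Nat.card_Icc]; omega, nodal_monic⟩

theorem eval_pNodal_natCast {k : ℕ} (hk : k ≤ d) : (pNodal K d).eval (k : K) = 0 :=
  eval_nodal_at_node (v := fun k : ℕ => (k : K)) (mem_range.2 (Nat.lt_succ_of_le hk))

theorem eval_qNodal_natCast {k : ℕ} (hk₁ : d + 1 ≤ k) (hk₂ : k ≤ 2 * d + 1) :
    (qNodal K d).eval (k : K) = 0 :=
  eval_nodal_at_node (v := fun k : ℕ => (k : K)) (mem_Icc.2 ⟨hk₁, hk₂⟩)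

variable [CharZero K]

theorem roots_pNodal [DecidableEq K] :
    (pNodal K d).roots = ((range (d + 1)).image (Nat.cast : ℕ → K)).val :=
  roots_nodal _ Nat.cast_injective.injOn

theorem roots_qNodal [DecidableEq K] :
    (qNodal K d).roots = ((Icc (d + 1) (2 * d + 1)).image (Nat.cast : ℕ → K)).val :=
  roots_nodal _ Nat.cast_injective.injOn

variable {K d}

theorem eval_qNodal_ne_zero_of_eval_pNodal {t : K} (ht : (pNodal K d).eval t = 0) :
    (qNodal K d).eval t ≠ 0 := by
  rw [pNodal, eval_nodal_eq_zero_iff] at ht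
  rw [qNodal, ne_eq, eval_nodal_eq_zero_iff]
  rintro ⟨j, hj, rfl⟩
  obtain ⟨k, hk, hkj⟩ := ht
  have := Nat.cast_injective hkj
  simp only [mem_range, mem_Icc] at hk hj
  omega

theorem eval_critWronskian_ne_zero_of_eval_pNodal {t : K} (ht : (pNodal K d).eval t = 0) :
    (critWronskian K d).eval t ≠ 0 := by
  classical
  exact eval_wronskian_ne_zero_of_isRoot (pNodal_ne_zero K d)
    (roots_pNodal K d ▸ (image _ _).nodup) ht (eval_qNodal_ne_zero_of_eval_pNodal ht)

theorem eval_critWronskian_ne_zero_of_eval_qNodal {t : K} (ht : (qNodal K d).eval t = 0) :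
    (critWronskian K d).eval t ≠ 0 := by
  classical
  rw [critWronskian, ← wronskian_neg_eq, Polynomial.eval_neg, neg_ne_zero]
  exact eval_wronskian_ne_zero_of_isRoot (qNodal_ne_zero K d)
    (roots_qNodal K d ▸ (image _ _).nodup) ht fun hp => eval_qNodal_ne_zero_of_eval_pNodal hp ht

variable (K d)

theorem critWronskian_ne_zero : critWronskian K d ≠ 0 := fun h => by
  simpa [h] using eval_critWronskian_ne_zero_of_eval_pNodal (eval_pNodal_natCast K d d.zero_le)

theorem natDegree_critWronskian_le : (critWronskian K d).natDegree ≤ 2 * d := by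
  have hW : critWronskian K d = wronskian (qNodal K d) (pNodal K d - qNodal K d) := by
    rw [critWronskian, ← sub_add_cancel (pNodal K d) (qNodal K d), wronskian_add_right,
      wronskian_self_eq_zero, add_zero, add_sub_cancel_right]
  have hlt := natDegree_wronskian_lt_add (hW ▸ critWronskian_ne_zero K d)
  have hsub := (isMonicOfDegree_pNodal K d).natDegree_sub_lt d.succ_ne_zero
    (isMonicOfDegree_qNodal K d)
  rw [← hW, (isMonicOfDegree_qNodal K d).natDegree_eq] at hlt
  omega

end Nodal

section RealRoots

variable (d : ℕ)

theorem map_critWronskian : (critWronskian ℝ d).map (algebraMap ℝ ℂ) = critWronskian ℂ d := by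
  simp only [critWronskian, pNodal, qNodal, map_wronskian, map_nodal]
  rfl

theorem eval_pNodal_ne_zero_of_lt {t : ℝ} (ht : d < t) : (pNodal ℝ d).eval t ≠ 0 :=
  eval_nodal_not_at_node fun k hk =>
    ((show (k : ℝ) ≤ d by exact_mod_cast Nat.lt_succ_iff.1 (mem_range.1 hk)).trans_lt ht).ne'

theorem eval_qNodal_ne_zero_of_lt {t : ℝ} (ht : t < d + 1) : (qNodal ℝ d).eval t ≠ 0 :=
  eval_nodal_not_at_node fun k hk =>
    (ht.trans_le (show (d : ℝ) + 1 ≤ k by exact_mod_cast (mem_Icc.1 hk).1)).ne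

theorem exists_eval_critWronskian_real_eq_zero {i : ℕ} (hi : i ∈ (range (2 * d + 1)).erase d) :
    ∃ c ∈ Set.Ioo (i : ℝ) (i + 1), (critWronskian ℝ d).eval c = 0 := by
  obtain ⟨hid, hi⟩ := mem_erase.1 hi
  rw [mem_range] at hi
  rcases hid.lt_or_gt with hid | hid
  · have hid' : (i : ℝ) + 1 ≤ d := by exact_mod_cast hid
    exact exists_eval_wronskian_eq_zero (lt_add_one _) (eval_pNodal_natCast ℝ d hid.le)
      (by exact_mod_cast eval_pNodal_natCast ℝ d (k := i + 1) hid)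
      fun t ht => eval_qNodal_ne_zero_of_lt d (by linarith [ht.2])
  · have hid' : (d : ℝ) < i := by exact_mod_cast hid
    obtain ⟨c, hc, hW⟩ := exists_eval_wronskian_eq_zero (lt_add_one (i : ℝ))
      (eval_qNodal_natCast ℝ d hid (by omega))
      (by exact_mod_cast eval_qNodal_natCast ℝ d (k := i + 1) (by omega) (by omega))
      fun t ht => eval_pNodal_ne_zero_of_lt d (hid'.trans_le ht.1)
    refine ⟨c, hc, ?_⟩
    rw [critWronskian, ← wronskian_neg_eq, Polynomial.eval_neg, hW, neg_zero]

theorem exists_roots_critWronskian_eq_val :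
    ∃ Z : Finset ℂ, #Z = 2 * d ∧ (critWronskian ℂ d).roots = Z.val := by
  classical
  choose! c hc hW using fun i (hi : i ∈ (range (2 * d + 1)).erase d) =>
    exists_eval_critWronskian_real_eq_zero d hi
  have hinj : Set.InjOn (fun i => (c i : ℂ)) ((range (2 * d + 1)).erase d) := by
    intro i hi j hj hij
    have h₁ := hc i hi
    have h₂ := hc j hj
    rw [show c i = c j from Complex.ofReal_injective hij] at h₁
    have hij : (i : ℝ) < j + 1 := h₁.1.trans h₂.2
    have hji : (j : ℝ) < i + 1 := h₂.1.trans h₁.2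
    norm_cast at hij hji
    omega
  have hcard : #(((range (2 * d + 1)).erase d).image fun i => (c i : ℂ)) = 2 * d := by
    rw [card_image_of_injOn hinj, card_erase_of_mem (mem_range.2 (by omega)), card_range,
      Nat.add_sub_cancel]
  refine ⟨_, hcard, roots_eq_val_of_natDegree_le (critWronskian_ne_zero ℂ d) ?_
    ((natDegree_critWronskian_le ℂ d).trans hcard.ge)⟩
  simp only [mem_image, forall_exists_index, and_imp]
  rintro _ i hi rfl
  rw [IsRoot, ← map_critWronskian, eval_map_algebraMap, ← Complex.coe_algebraMap,
    Polynomial.aeval_algebraMap_apply, Polynomial.coe_aeval_eq_eval, hW i hi, map_zero]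

theorem roots_critWronskian_nodup : (critWronskian ℂ d).roots.Nodup := by
  obtain ⟨Z, -, hZ⟩ := exists_roots_critWronskian_eq_val d
  exact hZ ▸ Z.nodup

theorem card_roots_toFinset_critWronskian : #(critWronskian ℂ d).roots.toFinset = 2 * d := by
  obtain ⟨Z, hcard, hZ⟩ := exists_roots_critWronskian_eq_val d
  rw [hZ, val_toFinset, hcard]

end RealRoots

theorem pderiv_zero_R2 (d k : ℕ) : pderiv 0 (R2 d k) = MvPolynomial.C (2 * d + 1 - k : ℂ) := by
  simp [R2, pderiv_X]

theorem pderiv_one_R2 (d k : ℕ) : pderiv 1 (R2 d k) = MvPolynomial.C (k : ℂ) := by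
  simp [R2, pderiv_X]

section Parametrization

variable {d : ℕ} {x y u v : ℂ}

theorem eval_R2 (h₁ : u + v = 2 * d + 1 + x - y) (h₂ : u * v = (2 * d + 1) * x) (k : ℕ) :
    MvPolynomial.eval ![x, y] (R2 d k) = (u - k) * (v - k) := by
  simp only [R2, map_sub, map_add, map_mul, MvPolynomial.eval_C, MvPolynomial.eval_X,
    Matrix.cons_val_zero, Matrix.cons_val_one, Matrix.cons_val_fin_one]
  linear_combination (k : ℂ) * h₁ - h₂

theorem eval_prod_R2 (h₁ : u + v = 2 * d + 1 + x - y) (h₂ : u * v = (2 * d + 1) * x)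
    (s : Finset ℕ) :
    MvPolynomial.eval ![x, y] (∏ k ∈ s, R2 d k) =
      (nodal s (fun k : ℕ => (k : ℂ))).eval u * (nodal s (fun k : ℕ => (k : ℂ))).eval v := by
  rw [map_prod, eval_nodal, eval_nodal, ← prod_mul_distrib]
  exact prod_congr rfl fun k _ => eval_R2 h₁ h₂ k

theorem eval_pderiv_prod_R2 (h₁ : u + v = 2 * d + 1 + x - y) (h₂ : u * v = (2 * d + 1) * x)
    (s : Finset ℕ) (a b : ℂ) :
    a * MvPolynomial.eval ![x, y] (pderiv 0 (∏ k ∈ s, R2 d k)) +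
        b * MvPolynomial.eval ![x, y] (pderiv 1 (∏ k ∈ s, R2 d k)) =
      ∑ k ∈ s, (a * (2 * d + 1 - k) + b * k) * ∏ j ∈ s.erase k, (u - j) * (v - j) := by
  simp only [Derivation.leibniz_finset_prod, pderiv_zero_R2, pderiv_one_R2, smul_eq_mul, map_sum,
    map_mul, map_prod, MvPolynomial.eval_C, eval_R2 h₁ h₂, mul_sum, ← sum_add_distrib]
  exact sum_congr rfl fun k _ => by ring

theorem eval_pderiv_prod_R2_sub (h₁ : u + v = 2 * d + 1 + x - y) (h₂ : u * v = (2 * d + 1) * x)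
    (s : Finset ℕ) :
    v * MvPolynomial.eval ![x, y] (pderiv 0 (∏ k ∈ s, R2 d k)) -
        (2 * d + 1 - v) * MvPolynomial.eval ![x, y] (pderiv 1 (∏ k ∈ s, R2 d k)) =
      (2 * d + 1) * (derivative (nodal s (fun k : ℕ => (k : ℂ)))).eval u *
        (nodal s (fun k : ℕ => (k : ℂ))).eval v := by
  rw [sub_eq_add_neg, ← neg_mul, eval_pderiv_prod_R2 h₁ h₂, eval_derivative_nodal, eval_nodal,
    mul_sum, sum_mul]
  refine sum_congr rfl fun k hk => ?_
  rw [prod_mul_distrib, ← mul_prod_erase s (fun j : ℕ => v - j) hk]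
  ring

theorem eval_pderiv_prod_R2_add (h₁ : u + u = 2 * d + 1 + x - y) (h₂ : u * u = (2 * d + 1) * x)
    (s : Finset ℕ) :
    MvPolynomial.eval ![x, y] (pderiv 0 (∏ k ∈ s, R2 d k)) +
        MvPolynomial.eval ![x, y] (pderiv 1 (∏ k ∈ s, R2 d k)) =
      (2 * d + 1) * ((derivative (nodal s (fun k : ℕ => (k : ℂ)))).eval u ^ 2 -
        (nodal s (fun k : ℕ => (k : ℂ))).eval u *
          (derivative (derivative (nodal s (fun k : ℕ => (k : ℂ))))).eval u) := by
  rw [← one_mul (MvPolynomial.eval _ (pderiv 0 _)), ← one_mul (MvPolynomial.eval _ (pderiv 1 _)),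
    eval_pderiv_prod_R2 h₁ h₂, ← sum_sq_prod_erase_eq_eval_nodal, mul_sum]
  refine sum_congr rfl fun k _ => ?_
  rw [sq, ← prod_mul_distrib]
  ring

theorem eval_pPoly (h₁ : u + v = 2 * d + 1 + x - y) (h₂ : u * v = (2 * d + 1) * x) :
    MvPolynomial.eval ![x, y] (pPoly d) = (pNodal ℂ d).eval u * (pNodal ℂ d).eval v :=
  eval_prod_R2 h₁ h₂ _

theorem eval_qPoly (h₁ : u + v = 2 * d + 1 + x - y) (h₂ : u * v = (2 * d + 1) * x) :
    MvPolynomial.eval ![x, y] (qPoly d) = (qNodal ℂ d).eval u * (qNodal ℂ d).eval v :=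
  eval_prod_R2 h₁ h₂ _

end Parametrization

noncomputable def critComponent (d : ℕ) (i : Fin 2) (z : ℂ × ℂ) : ℂ :=
  MvPolynomial.eval ![z.1, z.2] (qPoly d * pderiv i (pPoly d) - pPoly d * pderiv i (qPoly d))

def IsAffineCritical (d : ℕ) (z : ℂ × ℂ) : Prop :=
  ¬(MvPolynomial.eval ![z.1, z.2] (pPoly d) = 0 ∧ MvPolynomial.eval ![z.1, z.2] (qPoly d) = 0) ∧
    critComponent d 0 z = 0 ∧ critComponent d 1 z = 0

section CriticalEquations

variable {d : ℕ} {x y u v : ℂ}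

theorem critComponent_sub (h₁ : u + v = 2 * d + 1 + x - y) (h₂ : u * v = (2 * d + 1) * x) :
    v * critComponent d 0 (x, y) - (2 * d + 1 - v) * critComponent d 1 (x, y) =
      (2 * d + 1) * ((pNodal ℂ d).eval v * (qNodal ℂ d).eval v) * (critWronskian ℂ d).eval u := by
  have hp : v * MvPolynomial.eval ![x, y] (pderiv 0 (pPoly d)) -
      (2 * d + 1 - v) * MvPolynomial.eval ![x, y] (pderiv 1 (pPoly d)) =
      (2 * d + 1) * (derivative (pNodal ℂ d)).eval u * (pNodal ℂ d).eval v :=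
    eval_pderiv_prod_R2_sub h₁ h₂ _
  have hq : v * MvPolynomial.eval ![x, y] (pderiv 0 (qPoly d)) -
      (2 * d + 1 - v) * MvPolynomial.eval ![x, y] (pderiv 1 (qPoly d)) =
      (2 * d + 1) * (derivative (qNodal ℂ d)).eval u * (qNodal ℂ d).eval v :=
    eval_pderiv_prod_R2_sub h₁ h₂ _
  simp only [critComponent, map_sub, map_mul, eval_pPoly h₁ h₂, eval_qPoly h₁ h₂]
  rw [critWronskian, wronskian, Polynomial.eval_sub, Polynomial.eval_mul, Polynomial.eval_mul]
  linear_combination ((qNodal ℂ d).eval u * (qNodal ℂ d).eval v) * hp -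
    ((pNodal ℂ d).eval u * (pNodal ℂ d).eval v) * hq

theorem critComponent_add (h₁ : u + u = 2 * d + 1 + x - y) (h₂ : u * u = (2 * d + 1) * x) :
    critComponent d 0 (x, y) + critComponent d 1 (x, y) =
      (2 * d + 1) * ((qNodal ℂ d).eval u ^ 2 * ((derivative (pNodal ℂ d)).eval u ^ 2 -
          (pNodal ℂ d).eval u * (derivative (derivative (pNodal ℂ d))).eval u) -
        (pNodal ℂ d).eval u ^ 2 * ((derivative (qNodal ℂ d)).eval u ^ 2 -
          (qNodal ℂ d).eval u * (derivative (derivative (qNodal ℂ d))).eval u)) := by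
  have hp : MvPolynomial.eval ![x, y] (pderiv 0 (pPoly d)) +
      MvPolynomial.eval ![x, y] (pderiv 1 (pPoly d)) =
      (2 * d + 1) * ((derivative (pNodal ℂ d)).eval u ^ 2 -
        (pNodal ℂ d).eval u * (derivative (derivative (pNodal ℂ d))).eval u) :=
    eval_pderiv_prod_R2_add h₁ h₂ _
  have hq : MvPolynomial.eval ![x, y] (pderiv 0 (qPoly d)) +
      MvPolynomial.eval ![x, y] (pderiv 1 (qPoly d)) =
      (2 * d + 1) * ((derivative (qNodal ℂ d)).eval u ^ 2 -
        (qNodal ℂ d).eval u * (derivative (derivative (qNodal ℂ d))).eval u) :=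
    eval_pderiv_prod_R2_add h₁ h₂ _
  simp only [critComponent, map_sub, map_mul, eval_pPoly h₁ h₂, eval_qPoly h₁ h₂]
  linear_combination ((qNodal ℂ d).eval u * (qNodal ℂ d).eval u) * hp -
    ((pNodal ℂ d).eval u * (pNodal ℂ d).eval u) * hq

end CriticalEquations

theorem critComponent_add_ne_zero {d : ℕ} {x y u : ℂ} (h₁ : u + u = 2 * d + 1 + x - y)
    (h₂ : u * u = (2 * d + 1) * x)
    (hu : (pNodal ℂ d).eval u * (qNodal ℂ d).eval u * (critWronskian ℂ d).eval u = 0) :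
    critComponent d 0 (x, y) + critComponent d 1 (x, y) ≠ 0 := by
  classical
  have hS : (2 * d + 1 : ℂ) ≠ 0 := by exact_mod_cast (2 * d).succ_ne_zero
  rw [critComponent_add h₁ h₂]
  refine mul_ne_zero hS ?_
  set g := pNodal ℂ d
  set h := qNodal ℂ d
  set W := critWronskian ℂ d
  have hg' := eval_derivative_ne_zero_of_nodup_roots (r := u) (pNodal_ne_zero ℂ d)
    (roots_pNodal ℂ d ▸ (image _ _).nodup)
  have hh' := eval_derivative_ne_zero_of_nodup_roots (r := u) (qNodal_ne_zero ℂ d)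
    (roots_qNodal ℂ d ▸ (image _ _).nodup)
  rcases mul_eq_zero.1 hu with hu | hWu
  · rcases mul_eq_zero.1 hu with hgu | hhu
    · rw [hgu]
      simpa using ⟨eval_qNodal_ne_zero_of_eval_pNodal hgu, hg' hgu⟩
    · rw [hhu]
      simpa using ⟨fun hgu => eval_qNodal_ne_zero_of_eval_pNodal hgu hhu, hh' hhu⟩
  · have hkey :
        h.eval u ^ 2 * ((derivative g).eval u ^ 2 - g.eval u * (derivative (derivative g)).eval u) -
          g.eval u ^ 2 * ((derivative h).eval u ^ 2 -
            h.eval u * (derivative (derivative h)).eval u) =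
        W.eval u * (h.eval u * (derivative g).eval u + (derivative h).eval u * g.eval u) -
          g.eval u * h.eval u * (derivative W).eval u := by
      simp only [W, critWronskian, wronskian, derivative_sub, derivative_mul, Polynomial.eval_sub,
        Polynomial.eval_add, Polynomial.eval_mul]
      ring
    rw [hkey, hWu, zero_mul, zero_sub, neg_ne_zero]
    refine mul_ne_zero (mul_ne_zero ?_ ?_) (eval_derivative_ne_zero_of_nodup_roots
      (critWronskian_ne_zero ℂ d) (roots_critWronskian_nodup d) hWu)
    · exact fun hgu => eval_critWronskian_ne_zero_of_eval_pNodal hgu hWu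
    · exact fun hhu => eval_critWronskian_ne_zero_of_eval_qNodal hhu hWu

def IsCriticalPair (d : ℕ) (u v : ℂ) : Prop :=
  (pNodal ℂ d).IsRoot u ∧ (pNodal ℂ d).IsRoot v ∨ (qNodal ℂ d).IsRoot u ∧ (qNodal ℂ d).IsRoot v ∨
    (critWronskian ℂ d).IsRoot u ∧ (critWronskian ℂ d).IsRoot v

theorem isCriticalPair_iff {d : ℕ} {u v : ℂ} :
    IsCriticalPair d u v ↔
      ¬((pNodal ℂ d).eval u * (pNodal ℂ d).eval v = 0 ∧
          (qNodal ℂ d).eval u * (qNodal ℂ d).eval v = 0) ∧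
        (pNodal ℂ d).eval v * (qNodal ℂ d).eval v * (critWronskian ℂ d).eval u = 0 ∧
        (pNodal ℂ d).eval u * (qNodal ℂ d).eval u * (critWronskian ℂ d).eval v = 0 := by
  simp only [IsCriticalPair, IsRoot.def, mul_eq_zero]
  constructor
  · rintro (⟨hgu, hgv⟩ | ⟨hhu, hhv⟩ | ⟨hWu, hWv⟩)
    · refine ⟨fun ⟨_, hq⟩ => ?_, .inl (.inl hgv), .inl (.inl hgu)⟩
      rcases hq with hhu | hhv
      exacts [eval_qNodal_ne_zero_of_eval_pNodal hgu hhu,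
        eval_qNodal_ne_zero_of_eval_pNodal hgv hhv]
    · refine ⟨fun ⟨hp, _⟩ => ?_, .inl (.inr hhv), .inl (.inr hhu)⟩
      rcases hp with hgu | hgv
      exacts [eval_qNodal_ne_zero_of_eval_pNodal hgu hhu,
        eval_qNodal_ne_zero_of_eval_pNodal hgv hhv]
    · refine ⟨fun ⟨hp, _⟩ => ?_, .inr hWu, .inr hWv⟩
      rcases hp with hgu | hgv
      exacts [eval_critWronskian_ne_zero_of_eval_pNodal hgu hWu,
        eval_critWronskian_ne_zero_of_eval_pNodal hgv hWv]
  · rintro ⟨hpq, hu, hv⟩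
    rcases hu with (hgv | hhv) | hWu <;> rcases hv with (hgu | hhu) | hWv
    · exact .inl ⟨hgu, hgv⟩
    · exact absurd ⟨.inr hgv, .inl hhu⟩ hpq
    · exact absurd hWv (eval_critWronskian_ne_zero_of_eval_pNodal hgv)
    · exact absurd ⟨.inl hgu, .inr hhv⟩ hpq
    · exact .inr (.inl ⟨hhu, hhv⟩)
    · exact absurd hWv (eval_critWronskian_ne_zero_of_eval_qNodal hhv)
    · exact absurd hWu (eval_critWronskian_ne_zero_of_eval_pNodal hgu)
    · exact absurd hWu (eval_critWronskian_ne_zero_of_eval_qNodal hhu)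
    · exact .inr (.inr ⟨hWu, hWv⟩)

theorem isAffineCritical_iff {d : ℕ} {x y u v : ℂ} (h₁ : u + v = 2 * d + 1 + x - y)
    (h₂ : u * v = (2 * d + 1) * x) :
    IsAffineCritical d (x, y) ↔ u ≠ v ∧ IsCriticalPair d u v := by
  have hS : (2 * d + 1 : ℂ) ≠ 0 := by exact_mod_cast (2 * d).succ_ne_zero
  have hu := critComponent_sub h₁ h₂
  have hv := critComponent_sub (u := v) (v := u) (by rwa [add_comm]) (by rwa [mul_comm])
  rw [isCriticalPair_iff, IsAffineCritical, eval_pPoly h₁ h₂, eval_qPoly h₁ h₂]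
  constructor
  · rintro ⟨hpq, h₀, h₁'⟩
    rw [h₀, h₁', mul_zero, mul_zero, sub_zero, eq_comm, mul_assoc, mul_eq_zero,
      or_iff_right hS] at hu hv
    refine ⟨?_, hpq, hu, hv⟩
    rintro rfl
    exact critComponent_add_ne_zero h₁ h₂ hv (by rw [h₀, h₁', add_zero])
  · rintro ⟨hne, hpq, hzu, hzv⟩
    have hS' : (2 * d + 1 : ℂ) * (v - u) ≠ 0 := mul_ne_zero hS (sub_ne_zero.2 hne.symm)
    refine ⟨hpq, (mul_eq_zero.1 ?_).resolve_left hS', (mul_eq_zero.1 ?_).resolve_left hS'⟩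
    · linear_combination (2 * d + 1 - u) * hu - (2 * d + 1 - v) * hv +
        (2 * d + 1) * (2 * d + 1 - u) * hzu - (2 * d + 1) * (2 * d + 1 - v) * hzv
    · linear_combination u * hu - v * hv + (2 * d + 1) * u * hzu - (2 * d + 1) * v * hzv

noncomputable def pairPoint (d : ℕ) (s : Finset ℂ) : ℂ × ℂ :=
  ((∏ u ∈ s, u) / (2 * d + 1), 2 * d + 1 + (∏ u ∈ s, u) / (2 * d + 1) - ∑ u ∈ s, u)

theorem pairPoint_pair_eq_iff {d : ℕ} {u v x y : ℂ} (huv : u ≠ v) :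
    pairPoint d {u, v} = (x, y) ↔ u + v = 2 * d + 1 + x - y ∧ u * v = (2 * d + 1) * x := by
  have hS : (2 * d + 1 : ℂ) ≠ 0 := by exact_mod_cast (2 * d).succ_ne_zero
  rw [pairPoint, prod_pair huv, sum_pair huv, Prod.mk.injEq, div_eq_iff hS]
  constructor
  · rintro ⟨hx, rfl⟩
    rw [hx, mul_div_cancel_right₀ _ hS]
    exact ⟨by ring, by ring⟩
  · rintro ⟨hadd, hmul⟩
    refine ⟨by rw [hmul]; ring, ?_⟩
    rw [hmul, mul_div_cancel_left₀ _ hS]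
    linear_combination -hadd

theorem exists_add_eq_mul_eq (d : ℕ) (x y : ℂ) :
    ∃ u v : ℂ, u + v = 2 * d + 1 + x - y ∧ u * v = (2 * d + 1) * x := by
  obtain ⟨w, hw⟩ := IsAlgClosed.exists_eq_mul_self ((2 * d + 1 + x - y) ^ 2 - 4 * ((2 * d + 1) * x))
  exact ⟨(2 * d + 1 + x - y + w) / 2, (2 * d + 1 + x - y - w) / 2, by ring,
    by linear_combination (1 / 4 : ℂ) * hw⟩

noncomputable def criticalPairs (d : ℕ) : Finset (Finset ℂ) :=
  (pNodal ℂ d).roots.toFinset.powersetCard 2 ∪ (qNodal ℂ d).roots.toFinset.powersetCard 2 ∪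
    (critWronskian ℂ d).roots.toFinset.powersetCard 2

theorem pair_mem_criticalPairs_iff {d : ℕ} {u v : ℂ} (huv : u ≠ v) :
    {u, v} ∈ criticalPairs d ↔ IsCriticalPair d u v := by
  simp only [criticalPairs, IsCriticalPair, mem_union, mem_powersetCard, card_pair huv, and_true,
    insert_subset_iff, singleton_subset_iff, Multiset.mem_toFinset, mem_roots (pNodal_ne_zero ℂ d),
    mem_roots (qNodal_ne_zero ℂ d), mem_roots (critWronskian_ne_zero ℂ d), or_assoc]

theorem card_eq_two_of_mem_criticalPairs {d : ℕ} {s : Finset ℂ} (hs : s ∈ criticalPairs d) :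
    #s = 2 := by
  simp only [criticalPairs, mem_union, mem_powersetCard] at hs
  rcases hs with (hs | hs) | hs <;> exact hs.2

theorem isAffineCritical_iff_exists_mem_criticalPairs {d : ℕ} {z : ℂ × ℂ} :
    IsAffineCritical d z ↔ ∃ s ∈ criticalPairs d, pairPoint d s = z := by
  obtain ⟨x, y⟩ := z
  constructor
  · obtain ⟨u, v, h₁, h₂⟩ := exists_add_eq_mul_eq d x y
    rw [isAffineCritical_iff h₁ h₂]
    rintro ⟨huv, hpair⟩
    exact ⟨{u, v}, (pair_mem_criticalPairs_iff huv).2 hpair, (pairPoint_pair_eq_iff huv).2 ⟨h₁, h₂⟩⟩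
  · rintro ⟨s, hs, hsz⟩
    obtain ⟨u, v, huv, rfl⟩ := card_eq_two.1 (card_eq_two_of_mem_criticalPairs hs)
    obtain ⟨h₁, h₂⟩ := (pairPoint_pair_eq_iff huv).1 hsz
    exact (isAffineCritical_iff h₁ h₂).2 ⟨huv, (pair_mem_criticalPairs_iff huv).1 hs⟩

theorem injOn_pairPoint (d : ℕ) : Set.InjOn (pairPoint d) (criticalPairs d) := by
  intro s hs t ht hst
  obtain ⟨u, v, huv, rfl⟩ := card_eq_two.1 (card_eq_two_of_mem_criticalPairs hs)
  obtain ⟨a, b, hab, rfl⟩ := card_eq_two.1 (card_eq_two_of_mem_criticalPairs ht)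
  obtain ⟨h₁, h₂⟩ := (pairPoint_pair_eq_iff hab).1 hst.symm
  obtain ⟨h₁', h₂'⟩ := (pairPoint_pair_eq_iff huv).1 rfl
  exact pair_eq_pair_of_add_eq_of_mul_eq (h₁'.trans h₁.symm) (h₂'.trans h₂.symm)

theorem card_criticalPairs (d : ℕ) : #(criticalPairs d) = 3 * d ^ 2 := by
  classical
  have hp : (pNodal ℂ d).roots.toFinset = (range (d + 1)).image Nat.cast := by
    rw [roots_pNodal, val_toFinset]
  have hq : (qNodal ℂ d).roots.toFinset = (Icc (d + 1) (2 * d + 1)).image Nat.cast := by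
    rw [roots_qNodal, val_toFinset]
  have hpq : Disjoint (pNodal ℂ d).roots.toFinset (qNodal ℂ d).roots.toFinset := by
    simp only [disjoint_left, Multiset.mem_toFinset, mem_roots (pNodal_ne_zero ℂ d),
      mem_roots (qNodal_ne_zero ℂ d)]
    exact fun _ => eval_qNodal_ne_zero_of_eval_pNodal
  have hpW : Disjoint (pNodal ℂ d).roots.toFinset (critWronskian ℂ d).roots.toFinset := by
    simp only [disjoint_left, Multiset.mem_toFinset, mem_roots (pNodal_ne_zero ℂ d),
      mem_roots (critWronskian_ne_zero ℂ d)]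
    exact fun _ => eval_critWronskian_ne_zero_of_eval_pNodal
  have hqW : Disjoint (qNodal ℂ d).roots.toFinset (critWronskian ℂ d).roots.toFinset := by
    simp only [disjoint_left, Multiset.mem_toFinset, mem_roots (qNodal_ne_zero ℂ d),
      mem_roots (critWronskian_ne_zero ℂ d)]
    exact fun _ => eval_critWronskian_ne_zero_of_eval_qNodal
  rw [criticalPairs, card_union_of_disjoint (disjoint_union_left.2
      ⟨disjoint_powersetCard_of_disjoint two_ne_zero hpW,
        disjoint_powersetCard_of_disjoint two_ne_zero hqW⟩),
    card_union_of_disjoint (disjoint_powersetCard_of_disjoint two_ne_zero hpq),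
    card_powersetCard, card_powersetCard, card_powersetCard, card_roots_toFinset_critWronskian,
    hp, hq, card_image_of_injective _ Nat.cast_injective,
    card_image_of_injective _ Nat.cast_injective, card_range, Nat.card_Icc,
    show 2 * d + 1 + 1 - (d + 1) = d + 1 by omega]
  qify
  simp only [Nat.cast_choose_two]
  push_cast
  ring

theorem stmt5_general (d : ℕ) :
    {v : ℂ × ℂ |
      ¬(eval ![v.1, v.2] (pPoly d) = 0 ∧ eval ![v.1, v.2] (qPoly d) = 0) ∧
      eval ![v.1, v.2] (qPoly d * pderiv 0 (pPoly d) - pPoly d * pderiv 0 (qPoly d)) = 0 ∧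
      eval ![v.1, v.2] (qPoly d * pderiv 1 (pPoly d) - pPoly d * pderiv 1 (qPoly d)) = 0
      }.ncard = 3*d^2 := by
  change {z : ℂ × ℂ | IsAffineCritical d z}.ncard = 3 * d ^ 2
  have hset : {z : ℂ × ℂ | IsAffineCritical d z} = pairPoint d '' criticalPairs d :=
    Set.ext fun _ => isAffineCritical_iff_exists_mem_criticalPairs
  rw [hset, (injOn_pairPoint d).ncard_image, Set.ncard_coe_finset, card_criticalPairs]

/-- The set of affine critical points of `F = p/q` (points outside the indeterminacy
set `{p = q = 0}` where both components of `q∇p - p∇q` vanish) has exactly `3d²`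
elements. -/
theorem stmt5 (d : ℕ) (hd : 1 ≤ d) :
    {v : ℂ × ℂ |
      ¬(eval ![v.1, v.2] (pPoly d) = 0 ∧ eval ![v.1, v.2] (qPoly d) = 0) ∧
      eval ![v.1, v.2] (qPoly d * pderiv 0 (pPoly d) - pPoly d * pderiv 0 (qPoly d)) = 0 ∧
      eval ![v.1, v.2] (qPoly d * pderiv 1 (pPoly d) - pPoly d * pderiv 1 (qPoly d)) = 0
      }.ncard = 3*d^2 :=
  stmt5_general d
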